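/- Let 1 ≤ d ≤ k ≤ p and θ ∈ ℝ^p, and let θ̄ be the entries of |θ| sorted in descending order. Then every ω ∈ Π(θ; S_{k,d}) satisfies ‖ω‖₂² = max over all partitions of {1,…,k} into d nonempty blocks I₁,…,I_d of consecutive integers of Σ_{i=1}^d (Σ_{j∈Iᵢ} θ̄ⱼ)² / |Iᵢ|. -/

import Mathlib

open Metric Set

noncomputable section

/-- Euclidean space `ℝ^p`. -/
abbrev E (p : ℕ) := EuclideanSpace ℝ (Fin p)

/-- The (possibly set-valued) orthogonal projection onto a set `A`. -/
def projSet {p : ℕ} (A : Set (E p)) (θ : E p) : Set (E p) :=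
  {ω | ω ∈ A ∧ ‖θ - ω‖ = Metric.infDist θ A}

/-- The absolute values of the entries of `β`, sorted in descending order. -/
def sortedAbs {p : ℕ} (β : E p) : List ℝ :=
  List.insertionSort (· ≥ ·) (List.ofFn fun i => |β i|)

/-- The set `S_{k,d}` of vectors with at most `k` nonzero entries whose `k` largest
absolute values take at most `d` distinct values. -/
def Skd (p k d : ℕ) : Set (E p) :=
  {β | (Finset.univ.filter fun i => β i ≠ 0).card ≤ k ∧
    ((Finset.range k).image fun i => (sortedAbs β).getD i 0).card ≤ d}

/-- The value `Σ_{t<d} (Σ_{j ∈ Iₜ} θ̄ⱼ)² / |Iₜ|` of a consecutive partition of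
`{0, …, k−1}` given by boundaries `b 0 = 0 < b 1 < … < b d = k`. -/
def partitionVal {p : ℕ} (θ : E p) (d : ℕ) (b : ℕ → ℕ) : ℝ :=
  ∑ t ∈ Finset.range d,
    (∑ j ∈ Finset.Ico (b t) (b (t + 1)), (sortedAbs θ).getD j 0) ^ 2 /
      ((b (t + 1) : ℝ) - (b t : ℝ))

/-!
Since `S_{k,d}` is a cone, a nearest point `ω` satisfies `⟪θ, ω⟫ = ‖ω‖²`, so
`‖θ - ω‖² = ‖θ‖² - ‖ω‖²` and the claim is `dist(θ, S_{k,d})² = ‖θ‖² - max_b V(b)`, where `V`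
is `partitionVal`. For a partition `b`, spreading the block means of `θ̄` over the blocks, at the
positions and with the signs of the corresponding entries of `θ`, gives a point of `S_{k,d}` (the
means decrease with `θ̄`) at squared distance `‖θ‖² - V(b)`. Conversely, `‖θ - ω‖² ≥ ‖θ̄ - ω̄‖²`
by the rearrangement inequality; the top `k` entries of `ω̄` are constant on the blocks of some
partition `b` into `d` runs, and on each block the constant is at least as far from `θ̄` as the
block mean, which leaves `‖θ̄ - ω̄‖² ≥ ‖θ‖² - V(b)`.
-/

open Finset

variable {p : ℕ}

/-- `θ̄ⱼ` with `j` counted from `0`; it is `0` for `j ≥ p`. -/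
def sortedAbsAt (θ : E p) (j : ℕ) : ℝ := (sortedAbs θ).getD j 0

lemma sortedAbsAt_of_le (θ : E p) {j : ℕ} (hj : p ≤ j) : sortedAbsAt θ j = 0 :=
  List.getD_eq_default _ _ (by simpa [sortedAbs] using hj)

lemma sortedAbsAt_eq_of_antitone {β : E p} (e : Equiv.Perm (Fin p)) {f : Fin p → ℝ}
    (hf : Antitone f) (he : ∀ j, |β (e j)| = f j) (j : Fin p) : sortedAbsAt β j = f j := by
  have hsort : sortedAbs β = List.ofFn f := by
    refine List.Perm.eq_of_pairwise (fun a b _ _ hab hba => le_antisymm hba hab)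
      (List.pairwise_insertionSort _ _) (List.pairwise_ofFn.2 fun i j hij => hf hij.le) ?_
    have hfe : f = (fun i => |β i|) ∘ e := funext fun j => (he j).symm
    exact (List.perm_insertionSort _ _).trans (hfe ▸ e.ofFn_comp_perm _).symm
  simp [sortedAbsAt, hsort]

lemma exists_perm_sortedAbsAt (θ : E p) :
    ∃ e : Equiv.Perm (Fin p), ∀ j : Fin p, sortedAbsAt θ j = |θ (e j)| := by
  set e := Tuple.sort fun i => -|θ i|
  refine ⟨e, sortedAbsAt_eq_of_antitone e (fun i j hij => ?_) fun _ => rfl⟩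
  exact neg_le_neg_iff.1 (Tuple.monotone_sort (fun i => -|θ i|) hij)

lemma sortedAbsAt_nonneg (θ : E p) (j : ℕ) : 0 ≤ sortedAbsAt θ j := by
  rcases lt_or_ge j p with hj | hj
  · obtain ⟨e, he⟩ := exists_perm_sortedAbsAt θ
    simp [he ⟨j, hj⟩]
  · exact (sortedAbsAt_of_le θ hj).ge

lemma sortedAbsAt_antitone (θ : E p) : Antitone (sortedAbsAt θ) := by
  intro i j hij
  rcases lt_or_ge j p with hj | hj
  · rcases hij.lt_or_eq with hlt | rfl
    · have hlen : (sortedAbs θ).length = p := by simp [sortedAbs]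
      simp only [sortedAbsAt, List.getD_eq_getElem _ _ (hlen ▸ hj),
        List.getD_eq_getElem _ _ (hlen ▸ hlt.trans hj)]
      have hs : (sortedAbs θ).Pairwise (· ≥ ·) := List.pairwise_insertionSort _ _
      exact List.pairwise_iff_getElem.1 hs i j _ _ hlt
    · exact le_rfl
  · exact (sortedAbsAt_of_le θ hj).le.trans (sortedAbsAt_nonneg θ i)

lemma sum_range_sortedAbsAt (θ : E p) (F : ℝ → ℝ) :
    ∑ j ∈ range p, F (sortedAbsAt θ j) = ∑ i, F |θ i| := by
  obtain ⟨e, he⟩ := exists_perm_sortedAbsAt θ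
  rw [← Fin.sum_univ_eq_sum_range (fun j => F (sortedAbsAt θ j)),
    ← Equiv.sum_comp e (fun i => F |θ i|)]
  simp only [he]

lemma sum_range_sortedAbsAt_sq (θ : E p) : ∑ j ∈ range p, sortedAbsAt θ j ^ 2 = ‖θ‖ ^ 2 := by
  simp [sum_range_sortedAbsAt θ (· ^ 2), EuclideanSpace.real_norm_sq_eq]

lemma card_support_le_iff (β : E p) (k : ℕ) :
    #{i | β i ≠ 0} ≤ k ↔ ∀ j, k ≤ j → sortedAbsAt β j = 0 := by
  obtain ⟨e, he⟩ := exists_perm_sortedAbsAt β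
  have hcard : #{i | β i ≠ 0} = #{j : Fin p | sortedAbsAt β j ≠ 0} :=
    card_nbij' e.symm e (by intro i; simp [he]) (by intro j; simp [he])
      (fun i _ => by simp) (fun j _ => by simp)
  rw [hcard]
  constructor
  · intro hk j hkj
    by_contra hne
    have hjp : j < p := by by_contra h; exact hne (sortedAbsAt_of_le β (not_lt.1 h))
    have hsub : (univ.filter fun i : Fin p => (i : ℕ) < j + 1) ⊆
        univ.filter fun i : Fin p => sortedAbsAt β i ≠ 0 := by
      intro i hi
      simp only [mem_filter, Finset.mem_univ, true_and] at hi ⊢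
      exact (lt_of_lt_of_le ((sortedAbsAt_nonneg β j).lt_of_ne' hne)
        (sortedAbsAt_antitone β (Nat.lt_succ_iff.1 hi))).ne'
    have := Finset.card_le_card hsub
    rw [Fin.card_filter_val_lt] at this
    omega
  · intro hz
    calc #{j : Fin p | sortedAbsAt β j ≠ 0}
        ≤ #{j : Fin p | (j : ℕ) < k} := Finset.card_le_card fun j => by
          simp only [mem_filter, Finset.mem_univ, true_and]
          exact fun hj => by_contra fun h => hj (hz j (not_lt.1 h))
      _ ≤ k := by rw [Fin.card_filter_val_lt]; exact min_le_right _ _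

lemma mem_Skd_iff {k d : ℕ} {β : E p} :
    β ∈ Skd p k d ↔
      (∀ j, k ≤ j → sortedAbsAt β j = 0) ∧ #((range k).image (sortedAbsAt β)) ≤ d := by
  rw [← card_support_le_iff]
  rfl

lemma sortedAbsAt_smul (c : ℝ) (β : E p) (j : ℕ) :
    sortedAbsAt (c • β) j = |c| * sortedAbsAt β j := by
  rcases lt_or_ge j p with hj | hj
  · obtain ⟨e, he⟩ := exists_perm_sortedAbsAt β
    refine sortedAbsAt_eq_of_antitone (f := fun j : Fin p => |c| * sortedAbsAt β j) e
      (fun i j hij => mul_le_mul_of_nonneg_left (sortedAbsAt_antitone β hij) (abs_nonneg c))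
      (fun j => ?_) ⟨j, hj⟩
    simp [he, abs_mul]
  · simp [sortedAbsAt_of_le _ hj]

lemma smul_mem_Skd {k d : ℕ} {β : E p} (hβ : β ∈ Skd p k d) (c : ℝ) : c • β ∈ Skd p k d := by
  rw [mem_Skd_iff] at hβ ⊢
  refine ⟨fun j hj => by simp [sortedAbsAt_smul, hβ.1 j hj], ?_⟩
  rw [show sortedAbsAt (c • β) = (|c| * ·) ∘ sortedAbsAt β from funext (sortedAbsAt_smul c β),
    ← Finset.image_image]
  exact card_image_le.trans hβ.2

lemma inner_eq_norm_sq_of_forall_norm_sub_smul_le {F : Type*} [NormedAddCommGroup F]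
    [InnerProductSpace ℝ F] {θ ω : F} (h : ∀ c : ℝ, ‖θ - ω‖ ≤ ‖θ - c • ω‖) :
    inner ℝ θ ω = ‖ω‖ ^ 2 := by
  rcases eq_or_ne ω 0 with rfl | hω
  · simp
  have hW : 0 < ‖ω‖ ^ 2 := by positivity
  -- test against the multiple of `ω` closest to `θ`
  have h2 := pow_le_pow_left₀ (norm_nonneg _) (h (inner ℝ θ ω / ‖ω‖ ^ 2)) 2
  rw [norm_sub_sq_real, norm_sub_sq_real, inner_smul_right, norm_smul, mul_pow,
    Real.norm_eq_abs, sq_abs] at h2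
  field_simp at h2
  nlinarith [sq_nonneg (inner ℝ θ ω - ‖ω‖ ^ 2)]

lemma norm_sub_le_of_mem_projSet {A : Set (E p)} {θ ω β : E p} (hω : ω ∈ projSet A θ)
    (hβ : β ∈ A) : ‖θ - ω‖ ≤ ‖θ - β‖ := by
  rw [hω.2, ← dist_eq_norm]
  exact Metric.infDist_le_dist_of_mem hβ

lemma norm_sub_sq_of_mem_projSet {A : Set (E p)} (hA : ∀ β ∈ A, ∀ c : ℝ, c • β ∈ A)
    {θ ω : E p} (hω : ω ∈ projSet A θ) : ‖θ - ω‖ ^ 2 = ‖θ‖ ^ 2 - ‖ω‖ ^ 2 := by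
  have hinner := inner_eq_norm_sq_of_forall_norm_sub_smul_le
    fun c => norm_sub_le_of_mem_projSet hω (hA ω hω.1 c)
  rw [norm_sub_sq_real, hinner]
  ring

lemma sum_range_sortedAbsAt_sub_sq_le (θ ω : E p) :
    ∑ j ∈ range p, (sortedAbsAt θ j - sortedAbsAt ω j) ^ 2 ≤ ‖θ - ω‖ ^ 2 := by
  obtain ⟨eθ, hθ⟩ := exists_perm_sortedAbsAt θ
  obtain ⟨eω, hω⟩ := exists_perm_sortedAbsAt ω
  have hinner : inner ℝ θ ω ≤ ∑ j ∈ range p, sortedAbsAt θ j * sortedAbsAt ω j := by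
    have hmv : Monovary (fun j : Fin p => sortedAbsAt θ j) (fun j : Fin p => sortedAbsAt ω j) :=
      Antitone.monovary (fun i j hij => sortedAbsAt_antitone θ hij)
        (fun i j hij => sortedAbsAt_antitone ω hij)
    calc inner ℝ θ ω = ∑ i, θ i * ω i := by simp [PiLp.inner_apply, mul_comm]
      _ ≤ ∑ i, |θ i| * |ω i| := sum_le_sum fun i _ => (le_abs_self _).trans (abs_mul _ _).le
      _ = ∑ j : Fin p, sortedAbsAt θ j * sortedAbsAt ω ((eθ.trans eω.symm) j) := by
        rw [← Equiv.sum_comp eθ]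
        simp [hθ, hω]
      _ ≤ ∑ j : Fin p, sortedAbsAt θ j * sortedAbsAt ω j := hmv.sum_mul_comp_perm_le_sum_mul
      _ = ∑ j ∈ range p, sortedAbsAt θ j * sortedAbsAt ω j :=
        Fin.sum_univ_eq_sum_range (fun j => sortedAbsAt θ j * sortedAbsAt ω j) p
  have hexpand : ∑ j ∈ range p, (sortedAbsAt θ j - sortedAbsAt ω j) ^ 2 =
      ‖θ‖ ^ 2 - 2 * ∑ j ∈ range p, sortedAbsAt θ j * sortedAbsAt ω j + ‖ω‖ ^ 2 := by
    rw [← sum_range_sortedAbsAt_sq θ, ← sum_range_sortedAbsAt_sq ω, mul_sum,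
      ← sum_sub_distrib, ← sum_add_distrib]
    exact sum_congr rfl fun j _ => by ring
  rw [hexpand, norm_sub_sq_real]
  linarith

lemma sum_range_eq_sum_blocks {M : Type*} [AddCommMonoid M] {b : ℕ → ℕ} (hb : Monotone b)
    (hb0 : b 0 = 0) (f : ℕ → M) (d : ℕ) :
    ∑ j ∈ range (b d), f j = ∑ t ∈ range d, ∑ j ∈ Finset.Ico (b t) (b (t + 1)), f j := by
  induction d with
  | zero => simp [hb0]
  | succ d ih => rw [sum_range_succ, ← ih, sum_range_add_sum_Ico f (hb d.le_succ)]

def IsConstantBlocks {α : Type*} (u : ℕ → α) (d k : ℕ) (b : ℕ → ℕ) : Prop :=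
  StrictMono b ∧ b 0 = 0 ∧ b d = k ∧
    ∀ t < d, ∀ j ∈ Finset.Ico (b t) (b (t + 1)), u j = u (b t)

namespace IsConstantBlocks

variable {α : Type*} {u : ℕ → α} {d k : ℕ} {b : ℕ → ℕ}

lemma singletons (u : ℕ → α) (k : ℕ) : IsConstantBlocks u k k id := by
  refine ⟨strictMono_id, rfl, rfl, fun t _ j hj => ?_⟩
  obtain rfl : j = t := by simp only [Finset.mem_Ico, id] at hj; omega
  rfl

lemma extend_last (h : IsConstantBlocks u (d + 1) k b) (hu : u k = u (k - 1)) :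
    IsConstantBlocks u (d + 1) (k + 1) fun t => if t ≤ d then b t else b t + 1 := by
  obtain ⟨hb, hb0, hbd, hconst⟩ := h
  refine ⟨strictMono_nat_of_lt_succ fun t => ?_, by simp [hb0], by simp [hbd], ?_⟩
  · have := hb (Nat.lt_add_one t)
    split_ifs <;> omega
  · intro t ht j hj
    simp only [show t ≤ d by omega, if_true, Finset.mem_Ico] at hj ⊢
    by_cases htd : t < d
    · simp only [show t + 1 ≤ d by omega, if_true] at hj
      exact hconst t ht j (Finset.mem_Ico.2 hj)
    obtain rfl : t = d := by omega
    have hlast : b t < k := hbd ▸ hb (Nat.lt_add_one t)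
    simp only [show ¬ t + 1 ≤ t by omega, if_false, hbd] at hj
    rcases (Nat.lt_succ_iff.1 hj.2).lt_or_eq with hjk | rfl
    · exact hconst t ht j (Finset.mem_Ico.2 ⟨hj.1, by omega⟩)
    · rw [hu]
      exact hconst t ht (j - 1) (Finset.mem_Ico.2 ⟨by omega, by omega⟩)

lemma append_singleton (h : IsConstantBlocks u d k b) :
    IsConstantBlocks u (d + 1) (k + 1) fun t => if t ≤ d then b t else b (t - 1) + 1 := by
  obtain ⟨hb, hb0, hbd, hconst⟩ := h
  refine ⟨strictMono_nat_of_lt_succ fun t => ?_, by simp [hb0], by simp [hbd], ?_⟩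
  · have h1 := hb (Nat.lt_add_one t)
    have h2 := hb (Nat.lt_add_one (t - 1))
    split_ifs <;> grind
  · intro t ht j hj
    simp only [show t ≤ d by omega, if_true, Finset.mem_Ico] at hj ⊢
    by_cases htd : t < d
    · simp only [show t + 1 ≤ d by omega, if_true] at hj
      exact hconst t htd j (Finset.mem_Ico.2 hj)
    obtain rfl : t = d := by omega
    simp only [show ¬ t + 1 ≤ t by omega, if_false, Nat.add_sub_cancel, hbd] at hj ⊢
    rw [show j = k by omega]

end IsConstantBlocks

lemma exists_isConstantBlocks {α : Type*} [PartialOrder α] [DecidableEq α] {u : ℕ → α}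
    (hu : Antitone u) {k d : ℕ} (hdk : d ≤ k) (hcard : #((range k).image u) ≤ d) :
    ∃ b, IsConstantBlocks u d k b := by
  induction k generalizing d with
  | zero => exact ⟨id, Nat.le_zero.1 hdk ▸ .singletons u 0⟩
  | succ k ih =>
    rcases hdk.eq_or_lt with rfl | hdk
    · exact ⟨id, .singletons u _⟩
    obtain ⟨d, rfl⟩ : ∃ d', d = d' + 1 :=
      Nat.exists_eq_succ_of_ne_zero (by rintro rfl; simp at hcard)
    by_cases hrep : u k = u (k - 1)
    · obtain ⟨b, hb⟩ := ih (d := d + 1) (by omega) <| (Finset.card_le_card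
        (Finset.image_subset_image (Finset.range_subset_range.2 k.le_succ))).trans hcard
      exact ⟨_, hb.extend_last hrep⟩
    · have hnew : u k ∉ (range k).image u := by
        simp only [Finset.mem_image, Finset.mem_range, not_exists, not_and]
        intro j hj hjk
        exact hrep (le_antisymm (hu (Nat.sub_le k 1)) (hjk ▸ hu (Nat.le_sub_one_of_lt hj)))
      rw [range_add_one, image_insert, card_insert_of_notMem hnew] at hcard
      obtain ⟨b, hb⟩ := ih (d := d) (by omega) (by omega)
      exact ⟨_, hb.append_singleton⟩

lemma sum_sub_sq_eq {ι : Type*} (s : Finset ι) (f : ι → ℝ) (c : ℝ) :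
    ∑ i ∈ s, (f i - c) ^ 2 =
      ∑ i ∈ s, f i ^ 2 - (∑ i ∈ s, f i) ^ 2 / #s + #s * (c - (∑ i ∈ s, f i) / #s) ^ 2 := by
  rcases s.eq_empty_or_nonempty with rfl | hs
  · simp
  have hn : (#s : ℝ) ≠ 0 := by exact_mod_cast hs.card_pos.ne'
  have hexpand : ∑ i ∈ s, (f i - c) ^ 2 = ∑ i ∈ s, f i ^ 2 - 2 * c * ∑ i ∈ s, f i + #s * c ^ 2 := by
    simp_rw [sub_sq]
    rw [sum_add_distrib, sum_sub_distrib, mul_sum, sum_const, nsmul_eq_mul]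
    exact congrArg₂ _ (congrArg _ (sum_congr rfl fun i _ => by ring)) rfl
  rw [hexpand]
  field_simp
  ring

lemma sum_Ico_div_le_of_antitone {f : ℕ → ℝ} (hf : Antitone f) {a c : ℕ} (hac : a < c) :
    (∑ j ∈ Finset.Ico a c, f j) / ((c : ℝ) - a) ≤ f a := by
  have hlen : (c : ℝ) - a = #(Finset.Ico a c) := by rw [Nat.card_Ico, Nat.cast_sub hac.le]
  rw [div_le_iff₀ (sub_pos.2 (Nat.cast_lt.2 hac)),
    hlen, mul_comm, ← nsmul_eq_mul]
  exact sum_le_card_nsmul _ _ _ fun j hj => hf (Finset.mem_Ico.1 hj).1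

lemma le_sum_Ico_div_of_antitone {f : ℕ → ℝ} (hf : Antitone f) {a c : ℕ} (hac : a < c) :
    f (c - 1) ≤ (∑ j ∈ Finset.Ico a c, f j) / ((c : ℝ) - a) := by
  have hlen : (c : ℝ) - a = #(Finset.Ico a c) := by rw [Nat.card_Ico, Nat.cast_sub hac.le]
  rw [le_div_iff₀ (sub_pos.2 (Nat.cast_lt.2 hac)),
    hlen, mul_comm, ← nsmul_eq_mul]
  exact card_nsmul_le_sum _ _ _ fun j hj => hf (by have := Finset.mem_Ico.1 hj; omega)

lemma partitionVal_eq (θ : E p) (d : ℕ) (b : ℕ → ℕ) :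
    partitionVal θ d b = ∑ t ∈ range d,
      (∑ j ∈ Finset.Ico (b t) (b (t + 1)), sortedAbsAt θ j) ^ 2 / ((b (t + 1) : ℝ) - b t) :=
  rfl

section Blocks

variable (θ : E p) (b : ℕ → ℕ)

def blockMean (t : ℕ) : ℝ :=
  (∑ j ∈ Finset.Ico (b t) (b (t + 1)), sortedAbsAt θ j) / ((b (t + 1) : ℝ) - b t)

/-- The index `t` of the block `[b t, b (t + 1))` containing `j`, see `blockIndex_eq`. -/
def blockIndex (j : ℕ) : ℕ := Nat.findGreatest (fun t => b t ≤ j) j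

def blockAvg (k j : ℕ) : ℝ := if j < k then blockMean θ b (blockIndex b j) else 0

variable {θ b}

lemma blockMean_nonneg (hb : Monotone b) (t : ℕ) : 0 ≤ blockMean θ b t :=
  div_nonneg (sum_nonneg fun j _ => sortedAbsAt_nonneg θ j)
    (sub_nonneg.2 (Nat.cast_le.2 (hb t.le_succ)))

lemma antitone_blockMean (hb : StrictMono b) : Antitone (blockMean θ b) :=
  antitone_nat_of_succ_le fun t => calc
    blockMean θ b (t + 1) ≤ sortedAbsAt θ (b (t + 1)) :=
      sum_Ico_div_le_of_antitone (sortedAbsAt_antitone θ) (hb (Nat.lt_add_one _))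
    _ ≤ sortedAbsAt θ (b (t + 1) - 1) := sortedAbsAt_antitone θ (Nat.sub_le _ _)
    _ ≤ blockMean θ b t :=
      le_sum_Ico_div_of_antitone (sortedAbsAt_antitone θ) (hb (Nat.lt_add_one _))

lemma blockIndex_eq (hb : StrictMono b) {t j : ℕ} (h1 : b t ≤ j) (h2 : j < b (t + 1)) :
    blockIndex b j = t := by
  refine Nat.findGreatest_eq_iff.2 ⟨(hb.id_le t).trans h1, fun _ => h1, fun s hts _ hs => ?_⟩
  have := hb.monotone (show t + 1 ≤ s from hts)
  omega

lemma apply_blockIndex_le (hb0 : b 0 = 0) (j : ℕ) : b (blockIndex b j) ≤ j :=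
  Nat.findGreatest_spec (P := fun t => b t ≤ j) (Nat.zero_le j) (by simp [hb0])

lemma monotone_blockIndex (b : ℕ → ℕ) : Monotone (blockIndex b) :=
  fun _ _ hij => Nat.findGreatest_mono (fun _ ht => ht.trans hij) hij

lemma blockAvg_of_mem {d k t j : ℕ} (hb : StrictMono b) (hbd : b d = k) (ht : t < d)
    (hj : j ∈ Finset.Ico (b t) (b (t + 1))) : blockAvg θ b k j = blockMean θ b t := by
  rw [Finset.mem_Ico] at hj
  have hjk : j < k := hbd ▸ hj.2.trans_le (hb.monotone ht)
  rw [blockAvg, if_pos hjk, blockIndex_eq hb hj.1 hj.2]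

lemma blockAvg_nonneg (hb : Monotone b) (k j : ℕ) : 0 ≤ blockAvg θ b k j := by
  unfold blockAvg
  split_ifs
  exacts [blockMean_nonneg hb _, le_rfl]

lemma antitone_blockAvg (hb : StrictMono b) (k : ℕ) : Antitone (blockAvg θ b k) := by
  intro i j hij
  unfold blockAvg
  split_ifs with hj hi hi
  · exact antitone_blockMean hb (monotone_blockIndex b hij)
  · omega
  · exact blockMean_nonneg hb.monotone _
  · exact le_rfl

lemma isConstantBlocks_blockAvg {d k : ℕ} (hb : StrictMono b) (hb0 : b 0 = 0) (hbd : b d = k) :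
    IsConstantBlocks (blockAvg θ b k) d k b :=
  ⟨hb, hb0, hbd, fun t ht j hj => by
    rw [blockAvg_of_mem hb hbd ht hj,
      blockAvg_of_mem hb hbd ht (Finset.left_mem_Ico.2 (hb (Nat.lt_add_one t)))]⟩

variable (θ) in
lemma sum_range_sub_sq_of_isConstantBlocks {g : ℕ → ℝ} {d k : ℕ}
    (hg : IsConstantBlocks g d k b) (hg0 : ∀ j, k ≤ j → g j = 0) (hkp : k ≤ p) :
    ∑ j ∈ range p, (sortedAbsAt θ j - g j) ^ 2 = ‖θ‖ ^ 2 - partitionVal θ d b +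
      ∑ t ∈ range d, ((b (t + 1) : ℝ) - b t) * (g (b t) - blockMean θ b t) ^ 2 := by
  obtain ⟨hb, hb0, hbd, hconst⟩ := hg
  have hblocks (f : ℕ → ℝ) := hbd ▸ sum_range_eq_sum_blocks hb.monotone hb0 f d
  have htail : ∑ j ∈ Finset.Ico k p, (sortedAbsAt θ j - g j) ^ 2 =
      ∑ j ∈ Finset.Ico k p, sortedAbsAt θ j ^ 2 :=
    sum_congr rfl fun j hj => by rw [hg0 j (Finset.mem_Ico.1 hj).1, sub_zero]
  have hblock : ∀ t ∈ range d,
      ∑ j ∈ Finset.Ico (b t) (b (t + 1)), (sortedAbsAt θ j - g j) ^ 2 =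
        ∑ j ∈ Finset.Ico (b t) (b (t + 1)), sortedAbsAt θ j ^ 2 -
          (∑ j ∈ Finset.Ico (b t) (b (t + 1)), sortedAbsAt θ j) ^ 2 / ((b (t + 1) : ℝ) - b t) +
          ((b (t + 1) : ℝ) - b t) * (g (b t) - blockMean θ b t) ^ 2 := by
    intro t ht
    have hlen : (#(Finset.Ico (b t) (b (t + 1))) : ℝ) = (b (t + 1) : ℝ) - b t := by
      rw [Nat.card_Ico, Nat.cast_sub (hb.monotone t.le_succ)]
    rw [sum_congr rfl fun j hj => by rw [hconst t (Finset.mem_range.1 ht) j hj], sum_sub_sq_eq,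
      hlen]
    rfl
  rw [← sum_range_sortedAbsAt_sq θ, ← sum_range_add_sum_Ico _ hkp, ← sum_range_add_sum_Ico _ hkp,
    htail, hblocks, hblocks, partitionVal_eq, sum_congr rfl hblock, sum_add_distrib,
    sum_sub_distrib]
  ring

variable (θ) in
lemma norm_sq_sub_partitionVal_le {g : ℕ → ℝ} {d k : ℕ}
    (hg : IsConstantBlocks g d k b) (hg0 : ∀ j, k ≤ j → g j = 0) (hkp : k ≤ p) :
    ‖θ‖ ^ 2 - partitionVal θ d b ≤ ∑ j ∈ range p, (sortedAbsAt θ j - g j) ^ 2 := by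
  rw [sum_range_sub_sq_of_isConstantBlocks θ hg hg0 hkp]
  exact le_add_of_nonneg_right <| sum_nonneg fun t _ =>
    mul_nonneg (sub_nonneg.2 (Nat.cast_le.2 (hg.1.monotone t.le_succ))) (sq_nonneg _)

variable (θ) in
lemma sum_range_sub_blockAvg_sq {d k : ℕ} (hb : StrictMono b) (hb0 : b 0 = 0)
    (hbd : b d = k) (hkp : k ≤ p) :
    ∑ j ∈ range p, (sortedAbsAt θ j - blockAvg θ b k j) ^ 2 = ‖θ‖ ^ 2 - partitionVal θ d b := by
  rw [sum_range_sub_sq_of_isConstantBlocks θ (isConstantBlocks_blockAvg hb hb0 hbd)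
    (fun j hj => if_neg (not_lt.2 hj)) hkp, add_eq_left]
  refine sum_eq_zero fun t ht => ?_
  rw [blockAvg_of_mem hb hbd (Finset.mem_range.1 ht)
    (Finset.left_mem_Ico.2 (hb (Nat.lt_add_one t))), sub_self]
  ring

end Blocks

/-- The sign factor is `1` where `θ` vanishes (`SignType.sign` would give `0`), so that
`|θ i - alignedVec θ e g i| = ||θ i| - g (e⁻¹ i)|` for every `i`. -/
def alignedVec (θ : E p) (e : Equiv.Perm (Fin p)) (g : ℕ → ℝ) : E p :=
  WithLp.toLp 2 fun i => (if θ i < 0 then -1 else 1) * g (e.symm i)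

lemma norm_sub_alignedVec_sq {θ : E p} {e : Equiv.Perm (Fin p)}
    (he : ∀ j : Fin p, sortedAbsAt θ j = |θ (e j)|) (g : ℕ → ℝ) :
    ‖θ - alignedVec θ e g‖ ^ 2 = ∑ j ∈ range p, (sortedAbsAt θ j - g j) ^ 2 := by
  rw [EuclideanSpace.real_norm_sq_eq, ← Fin.sum_univ_eq_sum_range, ← Equiv.sum_comp e]
  refine sum_congr rfl fun j _ => ?_
  simp only [alignedVec, he, PiLp.sub_apply, Equiv.symm_apply_apply]
  split_ifs with h
  · rw [abs_of_neg h]; ring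
  · rw [abs_of_nonneg (not_lt.1 h)]; ring

lemma sortedAbsAt_alignedVec (θ : E p) (e : Equiv.Perm (Fin p)) {g : ℕ → ℝ} (hg : Antitone g)
    (hg0 : ∀ j, 0 ≤ g j) (j : Fin p) : sortedAbsAt (alignedVec θ e g) j = g j :=
  sortedAbsAt_eq_of_antitone (β := alignedVec θ e g) e (f := fun j : Fin p => g j)
    (fun _ _ hij => hg hij) (fun j => by
      simp only [alignedVec, Equiv.symm_apply_apply, abs_mul, abs_of_nonneg (hg0 j)]
      split_ifs <;> simp) j

lemma alignedVec_blockAvg_mem_Skd (θ : E p) (e : Equiv.Perm (Fin p)) {b : ℕ → ℕ} {d k : ℕ}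
    (hb : StrictMono b) (hb0 : b 0 = 0) (hbd : b d = k) (hkp : k ≤ p) :
    alignedVec θ e (blockAvg θ b k) ∈ Skd p k d := by
  have hval (j : ℕ) (hj : j < p) :
      sortedAbsAt (alignedVec θ e (blockAvg θ b k)) j = blockAvg θ b k j :=
    sortedAbsAt_alignedVec θ e (antitone_blockAvg hb k) (blockAvg_nonneg hb.monotone k) ⟨j, hj⟩
  refine mem_Skd_iff.2 ⟨fun j hkj => ?_, ?_⟩
  · rcases lt_or_ge j p with hjp | hjp
    · rw [hval j hjp]
      exact if_neg (not_lt.2 hkj)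
    · exact sortedAbsAt_of_le _ hjp
  · calc #((range k).image (sortedAbsAt (alignedVec θ e (blockAvg θ b k))))
        ≤ #((range d).image (blockMean θ b)) := Finset.card_le_card fun x hx => by
          obtain ⟨j, hj, rfl⟩ := Finset.mem_image.1 hx
          have hjk := Finset.mem_range.1 hj
          rw [hval j (hjk.trans_le hkp), blockAvg, if_pos hjk]
          refine Finset.mem_image_of_mem _ (Finset.mem_range.2 ?_)
          exact hb.lt_iff_lt.1 ((apply_blockIndex_le hb0 j).trans_lt (hbd ▸ hjk))
      _ ≤ d := card_image_le.trans (card_range d).le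

lemma exists_strictMono_eq_of_lt_succ {b : ℕ → ℕ} {d : ℕ} (hb : ∀ t < d, b t < b (t + 1)) :
    ∃ b' : ℕ → ℕ, StrictMono b' ∧ ∀ t ≤ d, b' t = b t := by
  refine ⟨fun t => b (min t d) + (t - d), strictMono_nat_of_lt_succ fun t => ?_,
    fun t ht => by simp [min_eq_left ht, Nat.sub_eq_zero_of_le ht]⟩
  rcases lt_or_ge t d with h | h
  · simpa [min_eq_left h.le, min_eq_left (Nat.succ_le_of_lt h), Nat.sub_eq_zero_of_le h.le,
      Nat.sub_eq_zero_of_le (Nat.succ_le_of_lt h)] using hb t h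
  · simp only [min_eq_right h, min_eq_right (h.trans t.le_succ)]
    omega

lemma partitionVal_congr (θ : E p) {d : ℕ} {b b' : ℕ → ℕ} (h : ∀ t ≤ d, b' t = b t) :
    partitionVal θ d b' = partitionVal θ d b :=
  sum_congr rfl fun t ht => by
    rw [h t (Finset.mem_range.1 ht).le, h (t + 1) (Finset.mem_range.1 ht)]

lemma partitionVal_le_norm_sq {k d : ℕ} (hkp : k ≤ p) {θ ω : E p}
    (hω : ω ∈ projSet (Skd p k d) θ) {b : ℕ → ℕ} (hb0 : b 0 = 0) (hbd : b d = k)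
    (hlt : ∀ t < d, b t < b (t + 1)) : partitionVal θ d b ≤ ‖ω‖ ^ 2 := by
  obtain ⟨b', hb', hb'b⟩ := exists_strictMono_eq_of_lt_succ hlt
  obtain ⟨e, he⟩ := exists_perm_sortedAbsAt θ
  have hb'0 : b' 0 = 0 := (hb'b 0 (Nat.zero_le d)).trans hb0
  have hb'd : b' d = k := (hb'b d le_rfl).trans hbd
  have hmem := alignedVec_blockAvg_mem_Skd θ e hb' hb'0 hb'd hkp
  have hmin := pow_le_pow_left₀ (norm_nonneg _) (norm_sub_le_of_mem_projSet hω hmem) 2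
  rw [norm_sub_sq_of_mem_projSet (fun _ => smul_mem_Skd) hω, norm_sub_alignedVec_sq he,
    sum_range_sub_blockAvg_sq θ hb' hb'0 hb'd hkp, partitionVal_congr θ hb'b] at hmin
  linarith

lemma exists_norm_sq_le_partitionVal {k d : ℕ} (hdk : d ≤ k) (hkp : k ≤ p) {θ ω : E p}
    (hω : ω ∈ projSet (Skd p k d) θ) :
    ∃ b : ℕ → ℕ, b 0 = 0 ∧ b d = k ∧ (∀ t < d, b t < b (t + 1)) ∧
      ‖ω‖ ^ 2 ≤ partitionVal θ d b := by
  obtain ⟨hz, hcard⟩ := mem_Skd_iff.1 hω.1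
  obtain ⟨b, hb⟩ := exists_isConstantBlocks (sortedAbsAt_antitone ω) hdk hcard
  refine ⟨b, hb.2.1, hb.2.2.1, fun t _ => hb.1 (Nat.lt_add_one t), ?_⟩
  have h1 := sum_range_sortedAbsAt_sub_sq_le θ ω
  have h2 := norm_sq_sub_partitionVal_le θ hb hz hkp
  rw [norm_sub_sq_of_mem_projSet (fun _ => smul_mem_Skd) hω] at h1
  linarith

theorem norm_sq_proj_Skd_general (p k d : ℕ) (hdk : d ≤ k) (hkp : k ≤ p)
    (θ : E p) :
    ∀ ω ∈ projSet (Skd p k d) θ,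
      IsGreatest
        {v : ℝ | ∃ b : ℕ → ℕ, b 0 = 0 ∧ b d = k ∧ (∀ t < d, b t < b (t + 1)) ∧
          v = partitionVal θ d b}
        (‖ω‖ ^ 2) := by
  intro ω hω
  obtain ⟨b, hb0, hbd, hlt, hle⟩ := exists_norm_sq_le_partitionVal hdk hkp hω
  refine ⟨⟨b, hb0, hbd, hlt, le_antisymm hle (partitionVal_le_norm_sq hkp hω hb0 hbd hlt)⟩, ?_⟩
  rintro _ ⟨b', hb0', hbd', hlt', rfl⟩
  exact partitionVal_le_norm_sq hkp hω hb0' hbd' hlt'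

/-- the squared Euclidean length of any projection of `θ` onto `S_{k,d}`
is the maximum, over all partitions of `{1,…,k}` into `d` nonempty blocks of
consecutive integers, of `Σᵢ (Σ_{j∈Iᵢ} θ̄ⱼ)²/|Iᵢ|`. -/
theorem norm_sq_proj_Skd (p k d : ℕ) (hd1 : 1 ≤ d) (hdk : d ≤ k) (hkp : k ≤ p)
    (θ : E p) :
    ∀ ω ∈ projSet (Skd p k d) θ,
      IsGreatest
        {v : ℝ | ∃ b : ℕ → ℕ, b 0 = 0 ∧ b d = k ∧ (∀ t < d, b t < b (t + 1)) ∧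
          v = partitionVal θ d b}
        (‖ω‖ ^ 2) :=
  norm_sq_proj_Skd_general p k d hdk hkp θ

end
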